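/- arXiv:1606.07234 — 2 statements merged into one kernel-verified Lean document; each statement's English description precedes it below -/
import Mathlib

section
/- Let H be a real Hilbert space with inner product given by a symmetric continuous coercive bilinear form a* satisfying α‖v‖² ≤ a*(v,v) ≤ M‖v‖² with 0 < α ≤ M. Let S be a closed subspace, z ∈ H, and P z ∈ S satisfying |a*(z − P z, φ)| ≤ ε ‖P z‖ ‖φ‖ for all φ ∈ S, with 0 ≤ ε < α/4. Then ‖z − P z‖ ≤ C (inf_{φ ∈ S} ‖z − φ‖ + ε ‖z‖) for a constant C depending only on α, M. -/
/-!
Testing the coercivity of `a` on the error `e = z - Pz` against `e = (z - φ) + (φ - Pz)` with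
`φ ∈ S` bounds `α‖e‖²` by continuity on the first part and by the perturbed orthogonality on the
second, where `φ - Pz ∈ S`. Since `‖Pz‖ ≤ ‖z‖ + ‖e‖` and `ε < α / 4`, the terms quadratic in `‖e‖`
are absorbed into the left-hand side, leaving a quadratic inequality in `‖e‖` whose solution is
the bound by `‖z - φ‖ + ε‖z‖`; taking the infimum over `φ` finishes.
-/

lemma le_of_mul_sq_le_mul_mul_add_sq {c K x y : ℝ} (hc : 0 < c) (hK : 0 ≤ K) (hy : 0 ≤ y)
    (h : c * x ^ 2 ≤ K * x * y + y ^ 2) : x ≤ ((K + 1) / c + 1) * y := by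
  have hKc : 0 ≤ (K + 1) / c := by positivity
  rcases le_or_gt x y with hxy | hyx
  · nlinarith
  · have hx : 0 < x := hy.trans_lt hyx
    -- For `y < x` the `y²` term is dominated by `x y`, so the inequality becomes linear in `x`.
    have hcx : c * x ≤ (K + 1) * y := by nlinarith
    have : x ≤ (K + 1) / c * y := by
      rw [div_mul_eq_mul_div, le_div_iff₀ hc]
      linarith
    nlinarith

lemma le_of_perturbed_energy_le {α M ε E d n : ℝ} (hα : 0 < α) (hM : 0 ≤ M) (hε : 0 ≤ ε)
    (hεα : ε ≤ α / 4) (hE : 0 ≤ E) (hd : 0 ≤ d) (hn : 0 ≤ n)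
    (h : α * E ^ 2 ≤ M * E * d + ε * (n + E) * (d + E)) :
    E ≤ ((M + α / 4 + 2) / (3 * α / 4) + 1) * (d + ε * n) := by
  have hεn : 0 ≤ ε * n := mul_nonneg hε hn
  have hquad : 3 * α / 4 * E ^ 2 ≤ (M + α / 4 + 1) * E * (d + ε * n) + (d + ε * n) ^ 2 := by
    nlinarith [mul_le_mul_of_nonneg_right hεα (mul_nonneg hE (add_nonneg hd hE)),
      mul_nonneg hE hεn, mul_nonneg hd hεn, mul_nonneg hεn hεn, mul_nonneg hE hd]
  convert le_of_mul_sq_le_mul_mul_add_sq (by positivity) (by positivity) (by positivity) hquad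
    using 4
  ring

lemma perturbed_galerkin_energy_le {H : Type*} [SeminormedAddCommGroup H] [Module ℝ H]
    (a : LinearMap.BilinForm ℝ H) {α M ε : ℝ} (hε : 0 ≤ ε)
    (hcont : ∀ v w : H, |a v w| ≤ M * ‖v‖ * ‖w‖) (hcoer : ∀ v : H, α * ‖v‖ ^ 2 ≤ a v v)
    {S : Submodule ℝ H} {z Pz φ : H} (hPz : Pz ∈ S) (hφ : φ ∈ S)
    (hgal : ∀ ψ ∈ S, |a (z - Pz) ψ| ≤ ε * ‖Pz‖ * ‖ψ‖) :
    α * ‖z - Pz‖ ^ 2 ≤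
      M * ‖z - Pz‖ * ‖z - φ‖ + ε * (‖z‖ + ‖z - Pz‖) * (‖z - φ‖ + ‖z - Pz‖) := by
  have hPz_le : ‖Pz‖ ≤ ‖z‖ + ‖z - Pz‖ := norm_le_norm_add_norm_sub z Pz
  have hφPz_le : ‖φ - Pz‖ ≤ ‖z - φ‖ + ‖z - Pz‖ := by
    simpa only [norm_sub_rev φ z] using norm_sub_le_norm_sub_add_norm_sub φ z Pz
  calc α * ‖z - Pz‖ ^ 2 ≤ a (z - Pz) (z - Pz) := hcoer _
    _ = a (z - Pz) (z - φ) + a (z - Pz) (φ - Pz) := by rw [← map_add, sub_add_sub_cancel]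
    _ ≤ M * ‖z - Pz‖ * ‖z - φ‖ + ε * ‖Pz‖ * ‖φ - Pz‖ :=
      add_le_add ((le_abs_self _).trans (hcont _ _))
        ((le_abs_self _).trans (hgal _ (S.sub_mem hφ hPz)))
    _ ≤ M * ‖z - Pz‖ * ‖z - φ‖ + ε * (‖z‖ + ‖z - Pz‖) * (‖z - φ‖ + ‖z - Pz‖) := by
      gcongr

lemma le_mul_csInf_add {s : Set ℝ} (hs : s.Nonempty) {x C δ : ℝ} (hC : 0 < C)
    (h : ∀ t ∈ s, x ≤ C * (t + δ)) : x ≤ C * (sInf s + δ) := by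
  have hlb : x / C - δ ≤ sInf s := le_csInf hs fun t ht => by
    rw [sub_le_iff_le_add, div_le_iff₀' hC]
    exact h t ht
  rw [sub_le_iff_le_add, div_le_iff₀' hC] at hlb
  exact hlb

theorem stmt_1_general {H : Type*} [NormedAddCommGroup H] [InnerProductSpace ℝ H]
    (α M : ℝ) (hα : 0 < α) (hαM : α ≤ M)
    (a : LinearMap.BilinForm ℝ H)
    (hcont : ∀ v w : H, |a v w| ≤ M * ‖v‖ * ‖w‖)
    (hcoer : ∀ v : H, α * ‖v‖ ^ 2 ≤ a v v) :
    ∃ C > 0, ∀ (S : Submodule ℝ H), IsClosed (S : Set H) →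
      ∀ (z Pz : H), Pz ∈ S →
      ∀ ε : ℝ, 0 ≤ ε → ε < α / 4 →
      (∀ φ ∈ S, |a (z - Pz) φ| ≤ ε * ‖Pz‖ * ‖φ‖) →
      ‖z - Pz‖ ≤ C * (sInf ((fun φ : H => ‖z - φ‖) '' (S : Set H)) + ε * ‖z‖) := by
  have hM : 0 ≤ M := hα.le.trans hαM
  refine ⟨(M + α / 4 + 2) / (3 * α / 4) + 1, by positivity, ?_⟩
  intro S _ z Pz hPz ε hε hεα hgal
  refine le_mul_csInf_add ⟨_, Set.mem_image_of_mem _ S.zero_mem⟩ (by positivity) ?_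
  rintro _ ⟨φ, hφ, rfl⟩
  exact le_of_perturbed_energy_le hα hM hε hεα.le (norm_nonneg _) (norm_nonneg _) (norm_nonneg _)
    (perturbed_galerkin_energy_le a hε hcont hcoer hPz hφ hgal)

/-- Céa-type lemma with perturbed Galerkin orthogonality. -/
theorem stmt_1 {H : Type*} [NormedAddCommGroup H] [InnerProductSpace ℝ H] [CompleteSpace H]
    (α M : ℝ) (hα : 0 < α) (hαM : α ≤ M)
    (a : LinearMap.BilinForm ℝ H)
    (hsymm : ∀ v w : H, a v w = a w v)
    (hcont : ∀ v w : H, |a v w| ≤ M * ‖v‖ * ‖w‖)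
    (hcoer : ∀ v : H, α * ‖v‖ ^ 2 ≤ a v v) :
    ∃ C > 0, ∀ (S : Submodule ℝ H), IsClosed (S : Set H) →
      ∀ (z Pz : H), Pz ∈ S →
      ∀ ε : ℝ, 0 ≤ ε → ε < α / 4 →
      (∀ φ ∈ S, |a (z - Pz) φ| ≤ ε * ‖Pz‖ * ‖φ‖) →
      ‖z - Pz‖ ≤ C * (sInf ((fun φ : H => ‖z - φ‖) '' (S : Set H)) + ε * ‖z‖) :=
  stmt_1_general α M hα hαM a hcont hcoer
end

section
/- Let M : [0,T] → ℝ^{N×N} be continuously differentiable with M(t) symmetric positive definite for all t, and suppose there exists μ > 0 such that w^T M'(t) z ≤ μ ‖w‖_{M(t)} ‖z‖_{M(t)} for all w, z ∈ ℝ^N and t ∈ [0,T], where ‖w‖_{M(t)}² = w^T M(t) w. Then for all 0 ≤ t ≤ s ≤ T and all w, z ∈ ℝ^N, w^T (M(s) − M(t)) z ≤ (e^{μ(s−t)} − 1) ‖w‖_{M(t)} ‖z‖_{M(t)}. -/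
/-!
Along `[t, T]` the quadratic forms satisfy `d/dr ‖v‖²_{M(r)} ≤ μ ‖v‖²_{M(r)}`, so Grönwall
gives `‖v‖_{M(r)} ≤ e^{μ(r-t)/2} ‖v‖_{M(t)}`. Hence the derivative of `r ↦ wᵀ M(r) z` is at
most `μ e^{μ(r-t)} ‖w‖_{M(t)} ‖z‖_{M(t)}`, the derivative of the right-hand side of the claim,
and both sides agree at `r = t`.
-/

open Matrix Set Real

section MatrixPath

variable {n : Type*} [Fintype n] {M M' : ℝ → Matrix n n ℝ} {a b μ : ℝ}

theorem hasDerivAt_dotProduct_mulVec {𝕜 : Type*} [NontriviallyNormedField 𝕜]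
    {M : 𝕜 → Matrix n n 𝕜} {M' : Matrix n n 𝕜} {x : 𝕜}
    (hM : ∀ i j, HasDerivAt (fun s => M s i j) (M' i j) x) (w z : n → 𝕜) :
    HasDerivAt (fun s => w ⬝ᵥ M s *ᵥ z) (w ⬝ᵥ M' *ᵥ z) x := by
  simp only [mulVec, dotProduct]
  exact HasDerivAt.fun_sum fun i _ =>
    (HasDerivAt.fun_sum fun j _ => (hM i j).mul_const (z j)).const_mul (w i)

theorem le_mul_exp_of_hasDerivWithinAt_le {f f' : ℝ → ℝ} {K : ℝ}
    (hf : ContinuousOn f (Icc a b)) (hf' : ∀ x ∈ Ico a b, HasDerivWithinAt f (f' x) (Ici x) x)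
    (bound : ∀ x ∈ Ico a b, f' x ≤ K * f x) :
    ∀ x ∈ Icc a b, f x ≤ f a * exp (K * (x - a)) := by
  intro x hx
  rw [← gronwallBound_ε0]
  exact le_gronwallBound_of_liminf_deriv_right_le hf
    (fun x hx _ hr => (hf' x hx).liminf_right_slope_le hr) le_rfl (by simpa using bound) x hx

variable (hM : ∀ x ∈ Icc a b, ∀ i j, HasDerivAt (fun s => M s i j) (M' x i j) x)
include hM

theorem continuousOn_dotProduct_mulVec (w z : n → ℝ) :
    ContinuousOn (fun s => w ⬝ᵥ M s *ᵥ z) (Icc a b) :=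
  fun x hx => (hasDerivAt_dotProduct_mulVec (hM x hx) w z).continuousAt.continuousWithinAt

theorem hasDerivWithinAt_dotProduct_mulVec (w z : n → ℝ) :
    ∀ x ∈ Ico a b, HasDerivWithinAt (fun s => w ⬝ᵥ M s *ᵥ z) (w ⬝ᵥ M' x *ᵥ z) (Ici x) x :=
  fun x hx => (hasDerivAt_dotProduct_mulVec (hM x (Ico_subset_Icc_self hx)) w z).hasDerivWithinAt

theorem sqrt_dotProduct_mulVec_self_le (v : n → ℝ)
    (hpos : ∀ x ∈ Icc a b, (M x).PosSemidef)
    (hbound : ∀ x ∈ Icc a b, v ⬝ᵥ M' x *ᵥ v ≤ μ * √(v ⬝ᵥ M x *ᵥ v) * √(v ⬝ᵥ M x *ᵥ v)) :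
    ∀ x ∈ Icc a b, √(v ⬝ᵥ M x *ᵥ v) ≤ √(v ⬝ᵥ M a *ᵥ v) * exp (μ * (x - a) / 2) := by
  have hgronwall := le_mul_exp_of_hasDerivWithinAt_le (K := μ)
    (continuousOn_dotProduct_mulVec hM v v) (hasDerivWithinAt_dotProduct_mulVec hM v v)
    (fun x hx => by
      have hx := Ico_subset_Icc_self hx
      have hnonneg : 0 ≤ v ⬝ᵥ M x *ᵥ v := by
        simpa using (hpos x hx).dotProduct_mulVec_nonneg v
      simpa [mul_assoc, mul_self_sqrt hnonneg] using hbound x hx)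
  intro x hx
  calc √(v ⬝ᵥ M x *ᵥ v) ≤ √((v ⬝ᵥ M a *ᵥ v) * exp (μ * (x - a))) :=
        sqrt_le_sqrt (hgronwall x hx)
    _ = √(v ⬝ᵥ M a *ᵥ v) * exp (μ * (x - a) / 2) := by
      rw [sqrt_mul' _ (exp_pos _).le, exp_half]

theorem dotProduct_sub_mulVec_le (hμ : 0 ≤ μ) (hpos : ∀ x ∈ Icc a b, (M x).PosSemidef)
    (hbound : ∀ x ∈ Icc a b, ∀ w z : n → ℝ,
      w ⬝ᵥ M' x *ᵥ z ≤ μ * √(w ⬝ᵥ M x *ᵥ w) * √(z ⬝ᵥ M x *ᵥ z))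
    (w z : n → ℝ) :
    ∀ x ∈ Icc a b, w ⬝ᵥ (M x - M a) *ᵥ z ≤
      (exp (μ * (x - a)) - 1) * √(w ⬝ᵥ M a *ᵥ w) * √(z ⬝ᵥ M a *ᵥ z) := by
  set C := √(w ⬝ᵥ M a *ᵥ w) * √(z ⬝ᵥ M a *ᵥ z)
  have hB (x : ℝ) : HasDerivAt (fun r => w ⬝ᵥ M a *ᵥ z + (exp (μ * (r - a)) - 1) * C)
      (exp (μ * (x - a)) * μ * C) x := by
    simpa using ((((hasDerivAt_id x).sub_const a).const_mul μ).exp.sub_const 1).mul_const C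
      |>.const_add (w ⬝ᵥ M a *ᵥ z)
  have hderiv_le : ∀ x ∈ Ico a b, w ⬝ᵥ M' x *ᵥ z ≤ exp (μ * (x - a)) * μ * C := by
    intro x hx
    have hx := Ico_subset_Icc_self hx
    have hw := sqrt_dotProduct_mulVec_self_le hM w hpos (fun y hy => hbound y hy w w) x hx
    have hz := sqrt_dotProduct_mulVec_self_le hM z hpos (fun y hy => hbound y hy z z) x hx
    calc w ⬝ᵥ M' x *ᵥ z ≤ μ * √(w ⬝ᵥ M x *ᵥ w) * √(z ⬝ᵥ M x *ᵥ z) := hbound x hx w z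
      _ ≤ μ * (√(w ⬝ᵥ M a *ᵥ w) * exp (μ * (x - a) / 2))
          * (√(z ⬝ᵥ M a *ᵥ z) * exp (μ * (x - a) / 2)) := by gcongr
      _ = exp (μ * (x - a)) * μ * C := by
        rw [← add_halves (μ * (x - a)), exp_add, add_halves]; ring
  have hcomparison := image_le_of_deriv_right_le_deriv_boundary
    (continuousOn_dotProduct_mulVec hM w z) (hasDerivWithinAt_dotProduct_mulVec hM w z)
    (by simp) (fun x _ => (hB x).continuousAt.continuousWithinAt)
    (fun x _ => (hB x).hasDerivWithinAt) hderiv_le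
  intro x hx
  have := hcomparison hx
  rw [sub_mulVec, dotProduct_sub]
  linarith

end MatrixPath

theorem stmt_5_general {N : ℕ} (T : ℝ)
    (M M' : ℝ → Matrix (Fin N) (Fin N) ℝ)
    (hderiv : ∀ t ∈ Set.Icc (0 : ℝ) T, ∀ i j : Fin N,
      HasDerivAt (fun s => M s i j) (M' t i j) t)
    (hpos : ∀ t ∈ Set.Icc (0 : ℝ) T, (M t).PosDef)
    (μ : ℝ) (hμ : 0 < μ)
    (hbound : ∀ t ∈ Set.Icc (0 : ℝ) T, ∀ w z : Fin N → ℝ,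
      w ⬝ᵥ (M' t).mulVec z ≤
        μ * Real.sqrt (w ⬝ᵥ (M t).mulVec w) * Real.sqrt (z ⬝ᵥ (M t).mulVec z)) :
    ∀ t ∈ Set.Icc (0 : ℝ) T, ∀ s ∈ Set.Icc t T, ∀ w z : Fin N → ℝ,
      w ⬝ᵥ ((M s - M t).mulVec z) ≤
        (Real.exp (μ * (s - t)) - 1) *
          Real.sqrt (w ⬝ᵥ (M t).mulVec w) * Real.sqrt (z ⬝ᵥ (M t).mulVec z) := by
  intro t ht s hs w z
  have hsub : Icc t T ⊆ Icc 0 T := Icc_subset_Icc_left ht.1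
  exact dotProduct_sub_mulVec_le (fun x hx => hderiv x (hsub hx)) hμ.le
    (fun x hx => (hpos x (hsub hx)).posSemidef) (fun x hx => hbound x (hsub hx)) w z s hs

/-- Key evolving mass-matrix perturbation estimate (Dziuk–Lubich–Mansour, Lemma 4.1):
if wᵀM'(t)z ≤ μ‖w‖_{M(t)}‖z‖_{M(t)}, then
wᵀ(M(s)-M(t))z ≤ (e^{μ(s-t)}-1)‖w‖_{M(t)}‖z‖_{M(t)}. -/
theorem stmt_5 {N : ℕ} (T : ℝ) (hT : 0 ≤ T)
    (M M' : ℝ → Matrix (Fin N) (Fin N) ℝ)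
    (hderiv : ∀ t ∈ Set.Icc (0 : ℝ) T, ∀ i j : Fin N,
      HasDerivAt (fun s => M s i j) (M' t i j) t)
    (hcont : ∀ i j : Fin N, ContinuousOn (fun s => M' s i j) (Set.Icc 0 T))
    (hsymm : ∀ t ∈ Set.Icc (0 : ℝ) T, (M t).IsSymm)
    (hpos : ∀ t ∈ Set.Icc (0 : ℝ) T, (M t).PosDef)
    (μ : ℝ) (hμ : 0 < μ)
    (hbound : ∀ t ∈ Set.Icc (0 : ℝ) T, ∀ w z : Fin N → ℝ,
      w ⬝ᵥ (M' t).mulVec z ≤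
        μ * Real.sqrt (w ⬝ᵥ (M t).mulVec w) * Real.sqrt (z ⬝ᵥ (M t).mulVec z)) :
    ∀ t ∈ Set.Icc (0 : ℝ) T, ∀ s ∈ Set.Icc t T, ∀ w z : Fin N → ℝ,
      w ⬝ᵥ ((M s - M t).mulVec z) ≤
        (Real.exp (μ * (s - t)) - 1) *
          Real.sqrt (w ⬝ᵥ (M t).mulVec w) * Real.sqrt (z ⬝ᵥ (M t).mulVec z) :=
  stmt_5_general T M M' hderiv hpos μ hμ hbound
end
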